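/- arXiv:2506.19554 — 3 statements merged into one kernel-verified Lean document; each statement's English description precedes it below -/
import Mathlib

section
/- Let X = (X₁, X₂) ~ mt(μ, Σ, ν) with X₁ ∈ ℝ^{n₁}, X₂ ∈ ℝ^{n₂}, and partition μ = (μ₁, μ₂) and Σ into blocks Σ₁₁, Σ₁₂, Σ₂₁, Σ₂₂. Then the conditional distribution of X₁ given X₂ = x₂ is a multivariate t-distribution mt(μ_{1|2}, Σ_{1|2}, ν + n₂), where μ_{1|2} = μ₁ + Σ₁₂Σ₂₂⁻¹(x₂ - μ₂) and Σ_{1|2} = [(ν + (x₂-μ₂)ᵀΣ₂₂⁻¹(x₂-μ₂))/(ν + n₂)]·[Σ₁₁ - Σ₁₂Σ₂₂⁻¹Σ₂₁]. -/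
open Matrix MeasureTheory Real

/-- Normalized multivariate t density `mt(μ, Σ, ν)`. -/
noncomputable def mtPdf {ι : Type*} [Fintype ι] [DecidableEq ι]
    (μ : ι → ℝ) (S : Matrix ι ι ℝ) (ν : ℝ) (x : ι → ℝ) : ℝ :=
  Real.Gamma ((ν + Fintype.card ι) / 2) /
      (Real.Gamma (ν / 2) * (ν * Real.pi) ^ ((Fintype.card ι : ℝ) / 2) * Real.sqrt S.det) *
    (1 + (x - μ) ⬝ᵥ (S⁻¹ *ᵥ (x - μ)) / ν) ^ (-((ν + Fintype.card ι) / 2))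

/-!
Inverting `Σ` through its Schur complement `Σ₁₁ - Σ₁₂Σ₂₂⁻¹Σ₂₁` splits the joint quadratic form
into `q₁ + q₂`, where `q₂` is the quadratic form of the marginal of `X₂` and `q₁` that of the
Schur complement at `x₁ - μ_{1|2}`; likewise `det Σ = det Σ₂₂ · det (Σ₁₁ - Σ₁₂Σ₂₂⁻¹Σ₂₁)`.
The densities depend on the data only through the dimension, `ν`, the determinant and the
quadratic form, so what remains is a scalar identity. It becomes linear after taking logarithms,
because `1 + (q₁ + q₂)/ν = (1 + q₂/ν)(1 + q₁/(ν + q₂))` and rescaling the Schur complement by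
`(ν + q₂)/(ν + n₂)` turns `1 + q₁/(ν + q₂)` into the kernel of a t-density with `ν + n₂` degrees
of freedom.
-/

open scoped ComplexOrder

namespace Matrix

variable {m n : Type*} [Fintype m] [Fintype n] [DecidableEq m] [DecidableEq n]

theorem posDef_fromBlocks₂₂_iff {𝕜 : Type*} [RCLike 𝕜] {A : Matrix m m 𝕜} {B : Matrix m n 𝕜}
    {D : Matrix n n 𝕜} (hD : D.PosDef) :
    (fromBlocks A B Bᴴ D).PosDef ↔ (A - B * D⁻¹ * Bᴴ).PosDef := by
  let := hD.isUnit.invertible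
  have hdet : (fromBlocks A B Bᴴ D).det = D.det * (A - B * D⁻¹ * Bᴴ).det := by
    rw [det_fromBlocks₂₂, invOf_eq_nonsing_inv]
  constructor
  · intro h
    refine ((PosDef.fromBlocks₂₂ A B hD).1 h.posSemidef).posDef_iff_det_ne_zero.2 ?_
    exact right_ne_zero_of_mul (hdet ▸ h.det_pos.ne')
  · intro h
    refine ((PosDef.fromBlocks₂₂ A B hD).2 h.posSemidef).posDef_iff_det_ne_zero.2 ?_
    exact hdet ▸ mul_ne_zero hD.det_pos.ne' h.det_pos.ne'

theorem sumElim_dotProduct_inv_fromBlocks_mulVec_sumElim {K : Type*} [Field K]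
    (A : Matrix m m K) (B : Matrix m n K) (C : Matrix n m K) (D : Matrix n n K)
    (hD : IsUnit D) (hS : IsUnit (A - B * D⁻¹ * C)) (v₁ : m → K) (v₂ : n → K) :
    Sum.elim v₁ v₂ ⬝ᵥ ((fromBlocks A B C D)⁻¹ *ᵥ Sum.elim v₁ v₂) =
      (v₁ - v₂ ᵥ* (D⁻¹ * C)) ⬝ᵥ ((A - B * D⁻¹ * C)⁻¹ *ᵥ (v₁ - (B * D⁻¹) *ᵥ v₂)) +
        v₂ ⬝ᵥ (D⁻¹ *ᵥ v₂) := by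
  let := hD.invertible
  let : Invertible (A - B * ⅟D * C) := by rw [invOf_eq_nonsing_inv]; exact hS.invertible
  let := fromBlocks₂₂Invertible A B C D
  rw [← invOf_eq_nonsing_inv (fromBlocks A B C D), invOf_fromBlocks₂₂_eq]
  simp only [invOf_eq_nonsing_inv, fromBlocks_mulVec, sumElim_dotProduct_sumElim,
    Sum.elim_comp_inl, Sum.elim_comp_inr]
  simp only [dotProduct_add, dotProduct_sub, sub_dotProduct, mulVec_sub, add_mulVec, neg_mulVec,
    dotProduct_neg, dotProduct_mulVec, vecMul_vecMul, sub_vecMul, Matrix.mul_assoc]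
  abel

theorem PosDef.dotProduct_inv_mulVec_nonneg {S : Matrix n n ℝ} (hS : S.PosDef) (v : n → ℝ) :
    0 ≤ v ⬝ᵥ (S⁻¹ *ᵥ v) := by
  simpa using hS.inv.posSemidef.dotProduct_mulVec_nonneg v

end Matrix

noncomputable def mtPdfOfForm (n : ℕ) (ν d q : ℝ) : ℝ :=
  Gamma ((ν + n) / 2) / (Gamma (ν / 2) * (ν * π) ^ ((n : ℝ) / 2) * √d) *
    (1 + q / ν) ^ (-((ν + n) / 2))

theorem mtPdfOfForm_eq_exp {n : ℕ} {ν d q : ℝ} (hν : 0 < ν) (hd : 0 < d) (hq : 0 < ν + q) :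
    mtPdfOfForm n ν d q = exp (log (Gamma ((ν + n) / 2)) - log (Gamma (ν / 2)) -
      n / 2 * (log ν + log π) - log d / 2 - (ν + n) / 2 * (log (ν + q) - log ν)) := by
  have hsqrt : √d = exp (log d / 2) := by
    rw [sqrt_eq_rpow, rpow_def_of_pos hd, mul_one_div]
  have hkernel : 1 + q / ν = (ν + q) / ν := by field_simp
  conv_lhs => rw [mtPdfOfForm, ← exp_log (Gamma_pos_of_pos (by positivity : 0 < (ν + n) / 2)),
    ← exp_log (Gamma_pos_of_pos (half_pos hν)), hsqrt, hkernel, rpow_def_of_pos (by positivity),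
    rpow_def_of_pos (div_pos hq hν), log_mul hν.ne' pi_ne_zero, log_div hq.ne' hν.ne',
    ← exp_add, ← exp_add, ← exp_sub, ← exp_add]
  ring_nf

theorem mtPdfOfForm_add_eq_mul {n₁ n₂ : ℕ} {ν d₁ d₂ q₁ q₂ : ℝ} (hν : 0 < ν) (hd₁ : 0 < d₁)
    (hd₂ : 0 < d₂) (hq₁ : 0 ≤ q₁) (hq₂ : 0 ≤ q₂) :
    mtPdfOfForm (n₁ + n₂) ν (d₂ * d₁) (q₁ + q₂) =
      mtPdfOfForm n₂ ν d₂ q₂ *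
        mtPdfOfForm n₁ (ν + n₂) (((ν + q₂) / (ν + n₂)) ^ n₁ * d₁)
          (q₁ / ((ν + q₂) / (ν + n₂))) := by
  have hνn : 0 < ν + n₂ := by positivity
  have hνq : 0 < ν + q₂ := by positivity
  set κ := (ν + q₂) / (ν + n₂) with hκ
  have hκpos : 0 < κ := div_pos hνq hνn
  have hlog_det : log (κ ^ n₁ * d₁) = n₁ * (log (ν + q₂) - log (ν + n₂)) + log d₁ := by
    rw [log_mul (by positivity) hd₁.ne', log_pow, log_div hνq.ne' hνn.ne']
  have hform : ν + n₂ + q₁ / κ = (ν + n₂) * (ν + (q₁ + q₂)) / (ν + q₂) := by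
    rw [hκ]; field_simp; ring
  have hlog_form : log (ν + n₂ + q₁ / κ) = log (ν + n₂) + log (ν + (q₁ + q₂)) - log (ν + q₂) := by
    rw [hform, log_div (by positivity) hνq.ne', log_mul hνn.ne' (by positivity)]
  rw [mtPdfOfForm_eq_exp hν (by positivity) (by positivity), mtPdfOfForm_eq_exp hν hd₂ hνq,
    mtPdfOfForm_eq_exp hνn (by positivity) (by positivity), ← exp_add, exp_eq_exp, hlog_det,
    hlog_form, log_mul hd₂.ne' hd₁.ne']
  push_cast
  rw [show ν + n₂ + n₁ = ν + (n₁ + n₂) by ring]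
  ring

section mtPdf

variable {ι : Type*} [Fintype ι] [DecidableEq ι]

theorem mtPdf_eq_mtPdfOfForm (μ : ι → ℝ) (S : Matrix ι ι ℝ) (ν : ℝ) (x : ι → ℝ) :
    mtPdf μ S ν x = mtPdfOfForm (Fintype.card ι) ν S.det ((x - μ) ⬝ᵥ (S⁻¹ *ᵥ (x - μ))) :=
  rfl

theorem mtPdf_smul (μ : ι → ℝ) {S : Matrix ι ι ℝ} (hS : IsUnit S.det) {c : ℝ} (hc : c ≠ 0)
    (ν : ℝ) (x : ι → ℝ) :
    mtPdf μ (c • S) ν x =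
      mtPdfOfForm (Fintype.card ι) ν (c ^ Fintype.card ι * S.det)
        ((x - μ) ⬝ᵥ (S⁻¹ *ᵥ (x - μ)) / c) := by
  let := invertibleOfNonzero hc
  rw [mtPdf_eq_mtPdfOfForm, det_smul, inv_smul S c hS, invOf_eq_inv, smul_mulVec, dotProduct_smul,
    smul_eq_mul, inv_mul_eq_div]

end mtPdf

/-- Conditioning a multivariate t: if `(X₁, X₂) ~ mt((μ₁, μ₂), Σ, ν)` with
`Σ = [[Σ₁₁, Σ₁₂], [Σ₂₁, Σ₂₂]]`, then the conditional distribution of `X₁` given `X₂ = x₂`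
(joint density divided by the marginal density of `X₂`, which is `mt(μ₂, Σ₂₂, ν)`) is
`mt(μ₁ + Σ₁₂Σ₂₂⁻¹(x₂ - μ₂), κ(x₂)·(Σ₁₁ - Σ₁₂Σ₂₂⁻¹Σ₂₁), ν + n₂)` with
`κ(x₂) = (ν + (x₂-μ₂)ᵀΣ₂₂⁻¹(x₂-μ₂))/(ν + n₂)`. -/
theorem mt_conditional
    {ι₁ ι₂ : Type*} [Fintype ι₁] [DecidableEq ι₁] [Fintype ι₂] [DecidableEq ι₂]
    (μ₁ : ι₁ → ℝ) (μ₂ : ι₂ → ℝ)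
    (S11 : Matrix ι₁ ι₁ ℝ) (S12 : Matrix ι₁ ι₂ ℝ) (S21 : Matrix ι₂ ι₁ ℝ)
    (S22 : Matrix ι₂ ι₂ ℝ) (ν : ℝ) (hν : 0 < ν)
    (hpd : (Matrix.fromBlocks S11 S12 S21 S22).PosDef) (hsym : S21 = S12ᵀ)
    (x₁ : ι₁ → ℝ) (x₂ : ι₂ → ℝ) :
    mtPdf (Sum.elim μ₁ μ₂) (Matrix.fromBlocks S11 S12 S21 S22) ν (Sum.elim x₁ x₂)
      = mtPdf μ₂ S22 ν x₂ *
        mtPdf (μ₁ + (S12 * S22⁻¹) *ᵥ (x₂ - μ₂))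
          (((ν + (x₂ - μ₂) ⬝ᵥ (S22⁻¹ *ᵥ (x₂ - μ₂))) / (ν + Fintype.card ι₂)) •
            (S11 - S12 * S22⁻¹ * S21))
          (ν + Fintype.card ι₂) x₁ := by
  subst hsym
  have hD : S22.PosDef := hpd.submatrix Sum.inr_injective
  have hSc : (S11 - S12 * S22⁻¹ * S12ᵀ).PosDef := by
    rw [← conjTranspose_eq_transpose_of_trivial] at hpd ⊢
    exact (posDef_fromBlocks₂₂_iff hD).1 hpd
  have hq₂ := hD.dotProduct_inv_mulVec_nonneg (x₂ - μ₂)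
  have hshift : (x₂ - μ₂) ᵥ* (S22⁻¹ * S12ᵀ) = (S12 * S22⁻¹) *ᵥ (x₂ - μ₂) := by
    rw [← mulVec_transpose, transpose_mul, transpose_transpose, transpose_nonsing_inv,
      (isHermitian_iff_isSymm.1 hD.isHermitian).eq]
  let := hD.isUnit.invertible
  rw [mtPdf_eq_mtPdfOfForm, mtPdf_eq_mtPdfOfForm,
    mtPdf_smul _ hSc.det_pos.ne'.isUnit (by positivity), ← Sum.elim_sub_sub,
    sumElim_dotProduct_inv_fromBlocks_mulVec_sumElim _ _ _ _ hD.isUnit hSc.isUnit, hshift,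
    sub_add_eq_sub_sub, det_fromBlocks₂₂, invOf_eq_nonsing_inv, Fintype.card_sum]
  exact mtPdfOfForm_add_eq_mul hν hSc.det_pos hD.det_pos (hSc.dotProduct_inv_mulVec_nonneg _) hq₂
end

section
/- Let A ∈ ℝ^{(n-n_b)×n_b} be an aggregation matrix and suppose the joint forecast Ŷ = (Û, B̂) ∈ ℝⁿ follows a multivariate t-distribution mt(ŷ, Ψ̂, ν̂), with ŷ = (û, b̂) and Ψ̂ partitioned into blocks Ψ_U, Ψ_{UB}, Ψ_{BU} = Ψ_{UB}ᵀ, Ψ_B. Then the conditional distribution of B̂ given Û - A B̂ = 0 is the multivariate t-distribution mt(b̃, Σ̃_B, ν̃) with b̃ = b̂ + (Ψ_{UB}ᵀ - Ψ_B Aᵀ) Q⁻¹ (A b̂ - û), Σ̃_B = C·[Ψ_B - (Ψ_{UB}ᵀ - Ψ_B Aᵀ) Q⁻¹ (Ψ_{UB}ᵀ - Ψ_B Aᵀ)ᵀ], ν̃ = ν̂ + n - n_b, where C = (ν̂ + (A b̂ - û)ᵀ Q⁻¹ (A b̂ - û))/(ν̂ + n - n_b) and Q = Ψ_U - Ψ_{UB}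 Aᵀ - A Ψ_{UB}ᵀ + A Ψ_B Aᵀ. -/
open Matrix MeasureTheory Real

/-!
The shear `T = [[1, -A], [0, 1]]` has determinant one and maps `(A b, b) - (û, b̂)` to
`(d, b - b̂)`, where `d = A b̂ - û` does not depend on `b`. So the Mahalanobis form of `Ψ̂` there
is that of `T Ψ̂ Tᵀ = [[Q, Rᵀ], [R, Ψ_B]]`, `R = Ψ_{UB}ᵀ - Ψ_B Aᵀ`, at `(d, b - b̂)`, which the
Schur complement `Σ = Ψ_B - R Q⁻¹ Rᵀ` splits as `α + (b - b̃)ᵀ Σ⁻¹ (b - b̃)` with `α = dᵀ Q⁻¹ d`.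
Finally `1 + (α + p)/ν̂ = (1 + α/ν̂)(1 + p/(ν̂ + α))` and `ν̂ + α = C ν̃`: the first factor goes
into the constant, the second is the kernel of `mt(b̃, C Σ, ν̃)`.
-/

namespace Matrix

variable {m n 𝕜 α : Type*} [Fintype m] [Fintype n] [DecidableEq m] [DecidableEq n]

open scoped ComplexOrder in
theorem PosDef.schur_complement_of_fromBlocks [RCLike 𝕜] {A : Matrix m m 𝕜} {B : Matrix m n 𝕜}
    {D : Matrix n n 𝕜} (h : (fromBlocks A B Bᴴ D).PosDef) : (D - Bᴴ * A⁻¹ * B).PosDef := by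
  have hA : A.PosDef := h.submatrix Sum.inl_injective
  have := hA.isUnit.invertible
  refine ((PosDef.fromBlocks₁₁ B D hA).1 h.posSemidef).posDef_iff_det_ne_zero.2 ?_
  have hdet := h.det_pos
  rw [det_fromBlocks₁₁, invOf_eq_nonsing_inv] at hdet
  exact right_ne_zero_of_mul hdet.ne'

theorem PosDef.fromBlocks_one_neg_mul_mul_transpose {Ψ : Matrix (m ⊕ n) (m ⊕ n) ℝ}
    (hΨ : Ψ.PosDef) (A : Matrix m n ℝ) :
    (fromBlocks 1 (-A) 0 1 * Ψ * (fromBlocks 1 (-A) 0 1)ᵀ).PosDef := by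
  have hT : IsUnit (fromBlocks 1 (-A) 0 1 : Matrix (m ⊕ n) (m ⊕ n) ℝ) :=
    (isUnit_iff_isUnit_det _).2 (by simp)
  simpa [conjTranspose_eq_transpose_of_trivial] using
    hΨ.mul_mul_conjTranspose_same (vecMul_injective_iff_isUnit.2 hT)

variable [CommRing α]

theorem sumElim_dotProduct_inv_fromBlocks_mulVec (Q : Matrix m m α) (B : Matrix m n α)
    (C : Matrix n m α) (D : Matrix n n α) (hQ : IsUnit Q.det)
    (hS : IsUnit (D - C * Q⁻¹ * B).det) (x : m → α) (y : n → α) :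
    Sum.elim x y ⬝ᵥ (fromBlocks Q B C D)⁻¹ *ᵥ Sum.elim x y =
      x ⬝ᵥ Q⁻¹ *ᵥ x +
        (y - x ᵥ* (Q⁻¹ * B)) ⬝ᵥ (D - C * Q⁻¹ * B)⁻¹ *ᵥ (y - C *ᵥ Q⁻¹ *ᵥ x) := by
  have := invertibleOfIsUnitDet Q hQ
  set S := D - C * Q⁻¹ * B
  set z := S⁻¹ *ᵥ (y - C *ᵥ Q⁻¹ *ᵥ x)
  have := invertibleOfIsUnitDet (fromBlocks Q B C D) <| by
    rw [det_fromBlocks₁₁, invOf_eq_nonsing_inv]; exact hQ.mul hS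
  have hSz : S *ᵥ z = y - C *ᵥ Q⁻¹ *ᵥ x := by
    simp only [z, mulVec_mulVec, mul_nonsing_inv _ hS, one_mulVec]
  have hsolve : (fromBlocks Q B C D)⁻¹ *ᵥ Sum.elim x y = Sum.elim (Q⁻¹ *ᵥ (x - B *ᵥ z)) z := by
    refine inv_mulVec_eq_vec ?_
    rw [fromBlocks_mulVec, Sum.elim_comp_inl, Sum.elim_comp_inr, mulVec_mulVec,
      mul_nonsing_inv _ hQ, one_mulVec, sub_add_cancel]
    congr 1
    rw [← sub_add_cancel y (C *ᵥ Q⁻¹ *ᵥ x), ← hSz]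
    simp only [S, sub_mulVec, mulVec_sub, mulVec_mulVec, Matrix.mul_assoc]
    abel
  rw [hsolve, sumElim_dotProduct_sumElim, dotProduct_mulVec, dotProduct_sub,
    dotProduct_mulVec _ B, vecMul_vecMul, ← dotProduct_mulVec, sub_dotProduct]
  ring

theorem dotProduct_inv_mul_mul_transpose_mulVec (Ψ : Matrix n n α) {S : Matrix n n α}
    (hS : IsUnit S.det) (x : n → α) :
    (S *ᵥ x) ⬝ᵥ (S * Ψ * Sᵀ)⁻¹ *ᵥ (S *ᵥ x) = x ⬝ᵥ Ψ⁻¹ *ᵥ x := by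
  have hconj : Sᵀ * (S * Ψ * Sᵀ)⁻¹ * S = Ψ⁻¹ := by
    rw [mul_inv_rev, mul_inv_rev, ← transpose_nonsing_inv, ← Matrix.mul_assoc,
      ← transpose_mul, nonsing_inv_mul _ hS, transpose_one, Matrix.one_mul, Matrix.mul_assoc,
      nonsing_inv_mul _ hS, Matrix.mul_one]
  rw [← hconj, ← mulVec_mulVec, ← mulVec_mulVec, dotProduct_mulVec x, vecMul_transpose]

theorem fromBlocks_one_neg_mul_mul_transpose (A : Matrix m n α) (P : Matrix m m α)
    (B : Matrix m n α) (C : Matrix n m α) (D : Matrix n n α) :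
    fromBlocks 1 (-A) 0 1 * fromBlocks P B C D * (fromBlocks 1 (-A) 0 1)ᵀ =
      fromBlocks (P - B * Aᵀ - A * C + A * D * Aᵀ) (B - A * D) (C - D * Aᵀ) D := by
  simp only [fromBlocks_transpose, fromBlocks_multiply, transpose_one, transpose_zero,
    transpose_neg, Matrix.one_mul, Matrix.mul_one, Matrix.zero_mul, Matrix.mul_zero,
    Matrix.neg_mul, Matrix.mul_neg, zero_add, Matrix.add_mul]
  congr 1 <;> abel

theorem fromBlocks_one_neg_mulVec_sumElim_mulVec_sub (A : Matrix m n α) (u : m → α)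
    (b₀ b : n → α) :
    fromBlocks 1 (-A) 0 1 *ᵥ (Sum.elim (A *ᵥ b) b - Sum.elim u b₀) =
      Sum.elim (A *ᵥ b₀ - u) (b - b₀) := by
  rw [← Sum.elim_sub_sub]
  simp only [fromBlocks_mulVec, Sum.elim_comp_inl, Sum.elim_comp_inr, one_mulVec, neg_mulVec,
    zero_mulVec, mulVec_sub, sub_zero, zero_add]
  congr 1
  abel

end Matrix

theorem one_add_add_div_eq_mul {ν α p ν' : ℝ} (hν : ν ≠ 0) (hν' : ν' ≠ 0) (hα : ν + α ≠ 0) :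
    1 + (α + p) / ν = (1 + α / ν) * (1 + ((ν + α) / ν')⁻¹ * p / ν') := by
  field_simp
  ring

theorem mtPdf_eq_mul_mtPdf_of_dotProduct_eq {ι κ : Type*} [Fintype ι] [DecidableEq ι]
    [Fintype κ] [DecidableEq κ] {μ : ι → ℝ} {S : Matrix ι ι ℝ} (hS : 0 < S.det) {ν : ℝ}
    (hν : 0 < ν) {T : Matrix κ κ ℝ} (hT : T.PosDef) {m : κ → ℝ} {α : ℝ} (hα : 0 ≤ α) {k : ℕ}
    (hk : Fintype.card ι = k + Fintype.card κ) (f : (κ → ℝ) → ι → ℝ)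
    (hf : ∀ b : κ → ℝ, (f b - μ) ⬝ᵥ S⁻¹ *ᵥ (f b - μ) = α + (b - m) ⬝ᵥ T⁻¹ *ᵥ (b - m)) :
    ∃ c > 0, ∀ b : κ → ℝ,
      mtPdf μ S ν (f b) = c * mtPdf m (((ν + α) / (ν + k)) • T) (ν + k) b := by
  set ν' := ν + (k : ℝ)
  set C := (ν + α) / ν'
  have hν' : 0 < ν' := by positivity
  have hC : 0 < C := by positivity
  have := invertibleOfNonzero hC.ne'
  have hinv : (C • T)⁻¹ = C⁻¹ • T⁻¹ := by
    rw [Matrix.inv_smul (A := T) C hT.det_pos.ne'.isUnit, invOf_eq_inv]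
  have hexp : -((ν + Fintype.card ι) / 2) = -((ν' + Fintype.card κ) / 2) := by
    rw [hk]; push_cast; ring
  have hdet : 0 < (C • T).det := by
    rw [det_smul]; exact mul_pos (pow_pos hC _) hT.det_pos
  have hα' : 0 < 1 + α / ν := by positivity
  refine ⟨Gamma ((ν + Fintype.card ι) / 2) /
      (Gamma (ν / 2) * (ν * π) ^ ((Fintype.card ι : ℝ) / 2) * √S.det) *
      (1 + α / ν) ^ (-((ν' + Fintype.card κ) / 2)) /
      (Gamma ((ν' + Fintype.card κ) / 2) /
        (Gamma (ν' / 2) * (ν' * π) ^ ((Fintype.card κ : ℝ) / 2) * √(C • T).det)),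
    by positivity, fun b => ?_⟩
  have hp : 0 ≤ (b - m) ⬝ᵥ T⁻¹ *ᵥ (b - m) := by
    simpa using hT.inv.posSemidef.dotProduct_mulVec_nonneg (b - m)
  have hG : 0 < Gamma ((ν' + Fintype.card κ) / 2) := Gamma_pos_of_pos (by positivity)
  unfold mtPdf
  rw [hf b, hinv, smul_mulVec, dotProduct_smul, smul_eq_mul,
    one_add_add_div_eq_mul hν.ne' hν'.ne' (by positivity), mul_rpow hα'.le (by positivity), hexp]
  have hCν : ν' * C = ν + α := mul_div_cancel₀ _ hν'.ne'
  field_simp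
  rw [hCν]

/-- The conditional density of `B̂` given `Û - A B̂ = 0` is the joint density at `(A b, b)` up to
normalization, hence the positive constant `c`. -/
theorem t_reconciliation_via_conditioning
    {ιu ιb : Type*} [Fintype ιu] [DecidableEq ιu] [Fintype ιb] [DecidableEq ιb]
    (A : Matrix ιu ιb ℝ) (uhat : ιu → ℝ) (bhat : ιb → ℝ)
    (ΨU : Matrix ιu ιu ℝ) (ΨUB : Matrix ιu ιb ℝ) (ΨB : Matrix ιb ιb ℝ)
    (νhat : ℝ) (hν : 0 < νhat)
    (hpd : (Matrix.fromBlocks ΨU ΨUB ΨUBᵀ ΨB).PosDef)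
    (Q : Matrix ιu ιu ℝ) (hQ : Q = ΨU - ΨUB * Aᵀ - A * ΨUBᵀ + A * ΨB * Aᵀ)
    (btilde : ιb → ℝ)
    (hb : btilde = bhat + (ΨUBᵀ - ΨB * Aᵀ) *ᵥ (Q⁻¹ *ᵥ (A *ᵥ bhat - uhat)))
    (C : ℝ)
    (hC : C = (νhat + (A *ᵥ bhat - uhat) ⬝ᵥ (Q⁻¹ *ᵥ (A *ᵥ bhat - uhat)))
              / (νhat + Fintype.card ιu))
    (SigTilde : Matrix ιb ιb ℝ)
    (hSig : SigTilde = C • (ΨB - (ΨUBᵀ - ΨB * Aᵀ) * Q⁻¹ * (ΨUBᵀ - ΨB * Aᵀ)ᵀ)) :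
    ∃ c > 0, ∀ b : ιb → ℝ,
      mtPdf (Sum.elim uhat bhat) (Matrix.fromBlocks ΨU ΨUB ΨUBᵀ ΨB) νhat
          (Sum.elim (A *ᵥ b) b)
        = c * mtPdf btilde SigTilde (νhat + Fintype.card ιu) b := by
  set R := ΨUBᵀ - ΨB * Aᵀ
  set d := A *ᵥ bhat - uhat
  have hΨB : ΨBᵀ = ΨB := (isHermitian_fromBlocks_iff.mp hpd.1).2.2.2
  have hconj : fromBlocks 1 (-A) 0 1 * fromBlocks ΨU ΨUB ΨUBᵀ ΨB * (fromBlocks 1 (-A) 0 1)ᵀ =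
      fromBlocks Q Rᵀ R ΨB := by
    rw [fromBlocks_one_neg_mul_mul_transpose, hQ]
    simp [R, transpose_sub, transpose_mul, hΨB]
  have hZ : (fromBlocks Q Rᵀ R ΨB).PosDef := hconj ▸ hpd.fromBlocks_one_neg_mul_mul_transpose A
  have hQpd : Q.PosDef := hZ.submatrix Sum.inl_injective
  have hSg : (ΨB - R * Q⁻¹ * Rᵀ).PosDef := by
    simpa using PosDef.schur_complement_of_fromBlocks (B := Rᵀ) (by simpa using hZ)
  have hRQ : d ᵥ* (Q⁻¹ * Rᵀ) = R *ᵥ Q⁻¹ *ᵥ d := by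
    rw [← vecMul_vecMul, vecMul_transpose, ← mulVec_transpose,
      ← conjTranspose_eq_transpose_of_trivial, hQpd.inv.isHermitian.eq]
  have hquad : ∀ b : ιb → ℝ, (Sum.elim (A *ᵥ b) b - Sum.elim uhat bhat) ⬝ᵥ
      (fromBlocks ΨU ΨUB ΨUBᵀ ΨB)⁻¹ *ᵥ (Sum.elim (A *ᵥ b) b - Sum.elim uhat bhat) =
      d ⬝ᵥ Q⁻¹ *ᵥ d + (b - btilde) ⬝ᵥ (ΨB - R * Q⁻¹ * Rᵀ)⁻¹ *ᵥ (b - btilde) := fun b => by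
    have hdet : IsUnit (fromBlocks 1 (-A) 0 1 : Matrix (ιu ⊕ ιb) (ιu ⊕ ιb) ℝ).det := by simp
    rw [← dotProduct_inv_mul_mul_transpose_mulVec _ hdet, hconj,
      fromBlocks_one_neg_mulVec_sumElim_mulVec_sub, sumElim_dotProduct_inv_fromBlocks_mulVec _ _ _ _
        hQpd.det_pos.ne'.isUnit hSg.det_pos.ne'.isUnit, hRQ, hb, sub_sub]
  subst hSig hC
  exact mtPdf_eq_mul_mtPdf_of_dotProduct_eq hpd.det_pos hν hSg
    (hQpd.inv.posSemidef.dotProduct_mulVec_nonneg d) (Fintype.card_sum ..) _ hquad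
end

section
/- In the minimal hierarchy, the t-Rec reconciled interval for the upper series is wider than the base interval whenever the scaled incoherence is large enough: specifically, if C·(Ψ'_u − g_u²/Q') > Ψ'_u, equivalently (b̂₁ + b̂₂ − û)²/Q' > ν̃·Ψ'_u/(Ψ'_u − g_u²/Q') − 1, then σ̃_u² > Ψ'_u (assuming Ψ'_u − g_u²/Q' > 0); in particular, for any fixed ν̃, Q', Ψ'_u, g_u with Ψ'_u − g_u²/Q' > 0, there exists an incoherence threshold beyond which the reconciled scale strictly exceeds the base scale. -/
/-- Minimal hierarchy: the t-Rec reconciled squared scale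
`σ̃_u² = (1/ν̃)(1 + d²/Q')(Ψ'_u - g_u²/Q')` (with `d = b̂₁ + b̂₂ - û` the incoherence)
exceeds the base squared scale `Ψ'_u` whenever
`d²/Q' > ν̃·Ψ'_u/(Ψ'_u - g_u²/Q') - 1`; in particular, there is an incoherence threshold
beyond which the reconciled scale strictly exceeds the base scale. -/
theorem tRec_widens_intervals_for_large_incoherence
    (νt Q' Ψu gu : ℝ) (hν : 0 < νt) (hQ : 0 < Q')
    (hpos : 0 < Ψu - gu ^ 2 / Q') :
    (∀ d : ℝ, d ^ 2 / Q' > νt * Ψu / (Ψu - gu ^ 2 / Q') - 1 →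
      (1 / νt) * (1 + d ^ 2 / Q') * (Ψu - gu ^ 2 / Q') > Ψu) ∧
    ∃ M : ℝ, ∀ d : ℝ, M < d ^ 2 →
      (1 / νt) * (1 + d ^ 2 / Q') * (Ψu - gu ^ 2 / Q') > Ψu := by
  set A := Ψu - gu ^ 2 / Q' with hA
  have key : ∀ d : ℝ, d ^ 2 / Q' > νt * Ψu / A - 1 →
      (1 / νt) * (1 + d ^ 2 / Q') * A > Ψu := by
    intro d hd
    have h1 : νt * Ψu / A < 1 + d ^ 2 / Q' := by linarith
    have h2 : νt * Ψu < (1 + d ^ 2 / Q') * A := (div_lt_iff₀ hpos).mp h1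
    have hν' : (0:ℝ) < 1 / νt := by positivity
    have := mul_lt_mul_of_pos_left h2 hν'
    have hc : 1 / νt * (νt * Ψu) = Ψu := by field_simp
    nlinarith [this]
  refine ⟨key, ⟨Q' * (νt * Ψu / A - 1), fun d hd => key d ?_⟩⟩
  rw [gt_iff_lt, lt_div_iff₀ hQ]
  linarith [hd]
end
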